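/- arXiv:1101.2440 — 3 statements merged into one kernel-verified Lean document; each statement's English description precedes it below -/
import Mathlib

section
/- For nonnegative measurable f on ℝᵈ with finite relevant integrals and reals p, q > 1, one has (∫f^p dx)(∫f^q dx) ≤ (∫f^{p+q−1} dx)(∫f dx). -/
/-!
The map `s ↦ ∫ f ^ s` is log-convex. Both `p` and `q` lie between `1` and `r = p + q - 1`,
namely `p = θ r + (1 - θ)` and `q = (1 - θ) r + θ` with `θ = (p - 1) / (p + q - 2)`, so Hölder's
inequality bounds `∫ f ^ p` by `(∫ f ^ r) ^ θ (∫ f) ^ (1 - θ)` and `∫ f ^ q` by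
`(∫ f ^ r) ^ (1 - θ) (∫ f) ^ θ`; the product of the two bounds is `(∫ f ^ r) (∫ f)`.
-/

open MeasureTheory Real

section

variable {α : Type*} [MeasurableSpace α] {μ : Measure α}

namespace ENNReal

theorem lintegral_rpow_interpolate_le {g : α → ℝ≥0∞} (hg : AEMeasurable g μ) {r θ : ℝ}
    (hr : 0 ≤ r) (hθ₀ : 0 ≤ θ) (hθ₁ : θ ≤ 1) :
    ∫⁻ x, g x ^ (θ * r + (1 - θ)) ∂μ ≤
      (∫⁻ x, g x ^ r ∂μ) ^ θ * (∫⁻ x, g x ∂μ) ^ (1 - θ) :=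
  calc ∫⁻ x, g x ^ (θ * r + (1 - θ)) ∂μ
      = ∫⁻ x, (g x ^ r) ^ θ * g x ^ (1 - θ) ∂μ := by
        refine lintegral_congr fun x => ?_
        rw [ENNReal.rpow_add_of_nonneg _ _ (by positivity) (by linarith), mul_comm θ r,
          ENNReal.rpow_mul]
    _ ≤ _ := lintegral_mul_norm_pow_le (hg.pow_const r) hg hθ₀ (by linarith) (by ring)

theorem lintegral_rpow_mul_lintegral_rpow_le {g : α → ℝ≥0∞} (hg : AEMeasurable g μ) {p q : ℝ}
    (hp : 1 ≤ p) (hq : 1 ≤ q) :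
    (∫⁻ x, g x ^ p ∂μ) * ∫⁻ x, g x ^ q ∂μ ≤ (∫⁻ x, g x ^ (p + q - 1) ∂μ) * ∫⁻ x, g x ∂μ := by
  rcases hp.eq_or_lt with rfl | hp
  · simp only [ENNReal.rpow_one, add_sub_cancel_left, mul_comm, le_refl]
  set r := p + q - 1
  set θ := (p - 1) / (p + q - 2)
  have hpq : 0 < p + q - 2 := by linarith
  have hθ₀ : 0 ≤ θ := div_nonneg (by linarith) hpq.le
  have hθ₁ : θ ≤ 1 := (div_le_one hpq).2 (by linarith)
  have hθp : θ * r + (1 - θ) = p := by simp only [θ, r]; field_simp; ring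
  have hθq : (1 - θ) * r + (1 - (1 - θ)) = q := by simp only [θ, r]; field_simp; ring
  have hr : 0 ≤ r := by simp only [r]; linarith
  calc (∫⁻ x, g x ^ p ∂μ) * ∫⁻ x, g x ^ q ∂μ
      ≤ ((∫⁻ x, g x ^ r ∂μ) ^ θ * (∫⁻ x, g x ∂μ) ^ (1 - θ)) *
          ((∫⁻ x, g x ^ r ∂μ) ^ (1 - θ) * (∫⁻ x, g x ∂μ) ^ (1 - (1 - θ))) := by
        have hbound_p := lintegral_rpow_interpolate_le hg hr hθ₀ hθ₁
        have hbound_q := lintegral_rpow_interpolate_le hg hr (by linarith) (by linarith : 1 - θ ≤ 1)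
        rw [hθp] at hbound_p
        rw [hθq] at hbound_q
        exact mul_le_mul' hbound_p hbound_q
    _ = (∫⁻ x, g x ^ r ∂μ) * ∫⁻ x, g x ∂μ := by
        rw [mul_mul_mul_comm, ← ENNReal.rpow_add_of_nonneg _ _ hθ₀ (by linarith),
          ← ENNReal.rpow_add_of_nonneg _ _ (by linarith) (by linarith)]
        simp only [add_sub_cancel, ENNReal.rpow_one]

end ENNReal

theorem integral_rpow_mul_integral_rpow_le {f : α → ℝ} (hf : 0 ≤ f) (hf₁ : Integrable f μ)
    {p q : ℝ} (hp : 1 ≤ p) (hq : 1 ≤ q) (hfr : Integrable (fun x => f x ^ (p + q - 1)) μ) :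
    (∫ x, f x ^ p ∂μ) * ∫ x, f x ^ q ∂μ ≤ (∫ x, f x ^ (p + q - 1) ∂μ) * ∫ x, f x ∂μ := by
  have hfm : AEMeasurable f μ := hf₁.aemeasurable
  have lintegral_ofReal_rpow (s : ℝ) (hs : 0 ≤ s) :
      ∫⁻ x, ENNReal.ofReal (f x) ^ s ∂μ = ∫⁻ x, ENNReal.ofReal (f x ^ s) ∂μ :=
    lintegral_congr fun x => ENNReal.ofReal_rpow_of_nonneg (hf x) hs
  have integral_rpow (s : ℝ) (hs : 0 ≤ s) :
      ∫ x, f x ^ s ∂μ = (∫⁻ x, ENNReal.ofReal (f x) ^ s ∂μ).toReal := by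
    rw [lintegral_ofReal_rpow s hs, integral_eq_lintegral_of_nonneg_ae
      (.of_forall fun x => rpow_nonneg (hf x) s) (hfm.pow_const s).aestronglyMeasurable]
  have hfin : (∫⁻ x, ENNReal.ofReal (f x) ^ (p + q - 1) ∂μ) * ∫⁻ x, ENNReal.ofReal (f x) ∂μ ≠ ⊤ :=
    ENNReal.mul_ne_top (lintegral_ofReal_rpow (p + q - 1) (by linarith) ▸ hfr.lintegral_lt_top.ne)
      hf₁.lintegral_lt_top.ne
  rw [integral_rpow p (by linarith), integral_rpow q (by linarith),
    integral_rpow (p + q - 1) (by linarith),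
    integral_eq_lintegral_of_nonneg_ae (.of_forall hf) hfm.aestronglyMeasurable,
    ← ENNReal.toReal_mul, ← ENNReal.toReal_mul]
  exact ENNReal.toReal_mono hfin
    (ENNReal.lintegral_rpow_mul_lintegral_rpow_le hfm.ennreal_ofReal hp hq)

end

theorem stmt_6_general (d : ℕ) (p q : ℝ) (hp : 1 < p) (hq : 1 < q)
    (f : EuclideanSpace ℝ (Fin d) → ℝ)
    (hnonneg : ∀ x, 0 ≤ f x)
    (hint1 : Integrable f)
    (hint2 : Integrable (fun x => f x ^ (p + q - 1))) :
    (∫ x, f x ^ p) * ∫ x, f x ^ q ≤ (∫ x, f x ^ (p + q - 1)) * ∫ x, f x :=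
  integral_rpow_mul_integral_rpow_le hnonneg hint1 hp.le hq.le hint2

/-- The Hölder/interpolation inequality: for nonnegative measurable `f ∈ L¹ ∩ L^{p+q-1}`
and reals `p, q > 1`, `(∫f^p)(∫f^q) ≤ (∫f^{p+q-1})(∫f)`. -/
theorem stmt_6 (d : ℕ) (hd : 0 < d) (p q : ℝ) (hp : 1 < p) (hq : 1 < q)
    (f : EuclideanSpace ℝ (Fin d) → ℝ)
    (hmeas : Measurable f) (hnonneg : ∀ x, 0 ≤ f x)
    (hint1 : Integrable f)
    (hint2 : Integrable (fun x => f x ^ (p + q - 1))) :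
    (∫ x, f x ^ p) * ∫ x, f x ^ q ≤ (∫ x, f x ^ (p + q - 1)) * ∫ x, f x :=
  stmt_6_general d p q hp hq f hnonneg hint1 hint2
end

section
/- Let m : [0,∞) → (0,∞) be nonincreasing and suppose there exist constants A, B > 0 and exponents q > 1, γ > 0 such that for every t₀ ≥ 0 and every τ > 0, m(t₀) − inf_{t>t₀} m(t) ≤ A m(t₀)^q τ + B m(t₀)^q τ^{−γ}. Then m(t) does not tend to 0 as t → ∞; in fact inf_t m(t) ≥ min(m(0)/2, c) for an explicit constant c = c(A,B,q,γ) > 0. -/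
open Real Set

/-- Abstract mass lower bound (the mechanism of Theorem 1.1): if a positive nonincreasing
continuous `m` satisfies `m(t₀) - m(t) ≤ A m(t₀)^q τ + B m(t₀)^q τ^{-γ}` for all `t₀ ≥ 0`,
`τ > 0` and `t > t₀`, then `m(t) ≥ min(m(0)/2, c)` for a constant `c = c(A,B,q,γ) > 0`. -/
theorem stmt_7 (A B q γ : ℝ) (hA : 0 < A) (hB : 0 < B) (hq : 1 < q) (hγ : 0 < γ) :
    ∃ c : ℝ, 0 < c ∧
      ∀ m : ℝ → ℝ,
        (∀ t, 0 ≤ t → 0 < m t) →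
        AntitoneOn m (Ici 0) →
        ContinuousOn m (Ici 0) →
        (∀ t₀, 0 ≤ t₀ → ∀ τ, 0 < τ → ∀ t, t₀ < t →
          m t₀ - m t ≤ A * m t₀ ^ q * τ + B * m t₀ ^ q * τ ^ (-γ)) →
        ∀ t, 0 ≤ t → min (m 0 / 2) c ≤ m t := by
  set K := A + B with hK
  have hK0 : 0 < K := by positivity
  set c : ℝ := (1 / (3 * K)) ^ (1 / (q - 1)) / 2 with hc
  have hc0 : 0 < c := by
    have : (0:ℝ) < (1 / (3 * K)) ^ (1 / (q - 1)) :=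
      Real.rpow_pos_of_pos (by positivity) _
    positivity
  have hq1 : (0:ℝ) < q - 1 := by linarith
  have h2c : (2 * c) ^ (q - 1) = 1 / (3 * K) := by
    have h2 : 2 * c = (1 / (3 * K)) ^ (1 / (q - 1)) := by rw [hc]; ring
    rw [h2, ← Real.rpow_mul (by positivity), one_div_mul_cancel (ne_of_gt hq1),
      Real.rpow_one]
  refine ⟨c, hc0, ?_⟩
  intro m hpos hmono hcont hest t ht
  by_contra h
  push_neg at h
  set L := min (m 0 / 2) c with hL
  have hL0 : 0 < L := lt_min (by have := hpos 0 le_rfl; linarith) hc0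
  have hLm0 : 2 * L ≤ m 0 := by
    have : L ≤ m 0 / 2 := min_le_left _ _
    linarith
  have hLc : L ≤ c := min_le_right _ _
  set s : ℝ := 3 / 2 * L with hs
  have hs0 : 0 < s := by positivity
  have hsmem : s ∈ Icc (m t) (m 0) := by
    constructor
    · have : m t < L := h
      linarith
    · linarith
  have himg : s ∈ m '' Icc 0 t := by
    apply intermediate_value_Icc' ht (hcont.mono ?_) hsmem
    intro x hx
    exact hx.1
  obtain ⟨t₀, ht₀mem, hmt₀⟩ := himg
  have ht₀0 : 0 ≤ t₀ := ht₀mem.1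
  have ht₀t : t₀ < t := by
    rcases lt_or_eq_of_le ht₀mem.2 with h' | h'
    · exact h'
    · exfalso; rw [h'] at hmt₀; rw [hmt₀] at h; linarith [h, hs0]
  have hdrop := hest t₀ ht₀0 1 one_pos t ht₀t
  rw [hmt₀, Real.one_rpow, mul_one, mul_one] at hdrop
  -- bound s^q
  have hs2c : s ≤ 2 * c := by rw [hs]; linarith
  have hsq : s ^ q ≤ s / (3 * K) := by
    have h1 : s ^ q = s ^ (q - 1) * s := by
      rw [← Real.rpow_add_one (ne_of_gt hs0)]; ring_nf
    have h2 : s ^ (q - 1) ≤ (2 * c) ^ (q - 1) :=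
      Real.rpow_le_rpow (le_of_lt hs0) hs2c (le_of_lt hq1)
    rw [h1, h2c] at *
    calc s ^ (q - 1) * s ≤ (1 / (3 * K)) * s := by
          apply mul_le_mul_of_nonneg_right _ (le_of_lt hs0)
          rw [← h2c]; exact h2
      _ = s / (3 * K) := by ring
  have hdrop2 : m t₀ - m t ≤ K * s ^ q := by
    have hKe : K * s ^ q = A * s ^ q + B * s ^ q := by rw [hK]; ring
    rw [hmt₀, hKe]; linarith [hdrop]
  have : m t₀ - m t ≤ s / 3 := by
    calc m t₀ - m t ≤ K * s ^ q := hdrop2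
      _ ≤ K * (s / (3 * K)) := by
          exact mul_le_mul_of_nonneg_left hsq (le_of_lt hK0)
      _ = s / 3 := by field_simp
  have : L ≤ m t := by rw [hmt₀] at this; rw [hs] at *; linarith
  linarith [h]
end

section
/- Let y : [t₀,∞) → (0,∞) be differentiable with y'(t) ≤ −C y(t)^{1+1/(q−1)} m^{−q/(q−1)} for constants C, m > 0 and integer q > 2. Then y(t) ≤ min(y(t₀), C'(q,C) (t−t₀)^{−(q−1)} m^q) for all t > t₀. -/
open Real Set

/-!
Along a positive solution of `y' ≤ -K y^(1+α)` the power `y^(-α)` grows at least linearly, with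
slope `α K`, so `y(t) ≤ (α K (t - t₀))^(-1/α)`. For `α = 1/(q-1)` and `K = C m^(-q/(q-1))` this
is `(C/(q-1))^(-(q-1)) (t - t₀)^(-(q-1)) m^q`.
-/

section DifferentialInequality

variable {y : ℝ → ℝ} {t₀ K α : ℝ}

theorem antitoneOn_of_derivWithin_le_neg_mul_rpow (hK : 0 ≤ K)
    (hy : ∀ t, t₀ ≤ t → 0 < y t) (hdiff : DifferentiableOn ℝ y (Ici t₀))
    (hderiv : ∀ t, t₀ ≤ t → derivWithin y (Ici t₀) t ≤ -K * y t ^ (1 + α)) :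
    AntitoneOn y (Ici t₀) := by
  refine antitoneOn_of_hasDerivWithinAt_nonpos (f' := derivWithin y (Ici t₀)) (convex_Ici t₀)
    hdiff.continuousOn (fun x hx => ?_) (fun x hx => ?_)
  · rw [interior_Ici] at hx ⊢
    exact ((hdiff x (mem_Ici.2 hx.le)).hasDerivWithinAt).mono Ioi_subset_Ici_self
  · rw [interior_Ici] at hx
    exact (hderiv x hx.le).trans <|
      mul_nonpos_of_nonpos_of_nonneg (neg_nonpos.2 hK) (rpow_pos_of_pos (hy x hx.le) _).le

theorem mul_sub_le_rpow_neg_sub_of_derivWithin_le_neg_mul_rpow (hα : 0 < α)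
    (hy : ∀ t, t₀ ≤ t → 0 < y t) (hdiff : DifferentiableOn ℝ y (Ici t₀))
    (hderiv : ∀ t, t₀ ≤ t → derivWithin y (Ici t₀) t ≤ -K * y t ^ (1 + α))
    (t : ℝ) (ht : t₀ ≤ t) :
    α * K * (t - t₀) ≤ y t ^ (-α) - y t₀ ^ (-α) := by
  have hasDeriv : ∀ x, t₀ < x →
      HasDerivAt (fun s => y s ^ (-α)) (deriv y x * (-α) * y x ^ (-α - 1)) x := fun x hx =>
    ((hdiff x (mem_Ici.2 hx.le)).differentiableAt (Ici_mem_nhds hx)).hasDerivAt.rpow_const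
      (Or.inl (hy x hx.le).ne')
  refine (convex_Ici t₀).mul_sub_le_image_sub_of_le_deriv
    (hdiff.continuousOn.rpow_const fun x hx => Or.inl (hy x hx).ne')
    (fun x hx => ?_) (fun x hx => ?_) t₀ self_mem_Ici t ht ht
  · rw [interior_Ici] at hx
    exact (hasDeriv x hx).differentiableAt.differentiableWithinAt
  · rw [interior_Ici] at hx
    have hyx := hy x hx.le
    have hderiv_x : deriv y x ≤ -K * y x ^ (1 + α) := by
      rw [← derivWithin_of_mem_nhds (Ici_mem_nhds hx)]
      exact hderiv x hx.le
    have hcancel : y x ^ (1 + α) * y x ^ (-α - 1) = 1 := by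
      rw [← rpow_add hyx, show 1 + α + (-α - 1) = 0 by ring, rpow_zero]
    have hfactor : -α * y x ^ (-α - 1) ≤ 0 :=
      mul_nonpos_of_nonpos_of_nonneg (neg_nonpos.2 hα.le) (rpow_pos_of_pos hyx _).le
    rw [(hasDeriv x hx).deriv]
    calc α * K = -K * y x ^ (1 + α) * (-α * y x ^ (-α - 1)) := by
          linear_combination (α * K) * hcancel.symm
      _ ≤ deriv y x * (-α * y x ^ (-α - 1)) := mul_le_mul_of_nonpos_right hderiv_x hfactor
      _ = deriv y x * (-α) * y x ^ (-α - 1) := by ring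

theorem le_rpow_of_derivWithin_le_neg_mul_rpow (hK : 0 < K) (hα : 0 < α)
    (hy : ∀ t, t₀ ≤ t → 0 < y t) (hdiff : DifferentiableOn ℝ y (Ici t₀))
    (hderiv : ∀ t, t₀ ≤ t → derivWithin y (Ici t₀) t ≤ -K * y t ^ (1 + α))
    (t : ℝ) (ht : t₀ < t) :
    y t ≤ (α * K * (t - t₀)) ^ (-α⁻¹) := by
  have hyt := hy t ht.le
  have hgrowth : α * K * (t - t₀) ≤ y t ^ (-α) := by
    have := mul_sub_le_rpow_neg_sub_of_derivWithin_le_neg_mul_rpow hα hy hdiff hderiv t ht.le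
    linarith [rpow_pos_of_pos (hy t₀ le_rfl) (-α)]
  calc y t = (y t ^ (-α)) ^ (-α⁻¹) := by
        rw [← rpow_mul hyt.le, neg_mul_neg, mul_inv_cancel₀ hα.ne', rpow_one]
    _ ≤ (α * K * (t - t₀)) ^ (-α⁻¹) :=
        rpow_le_rpow_of_nonpos (by have := sub_pos.2 ht; positivity) hgrowth
          (neg_nonpos.2 (inv_pos.2 hα).le)

end DifferentialInequality

/-- ODE comparison in the proof of Theorem 4.3: there is `C' = C'(q,C)` such that any
positive differentiable `y` on `[t₀,∞)` with `y' ≤ -C y^{1+1/(q-1)} m^{-q/(q-1)}`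
satisfies `y(t) ≤ min(y(t₀), C' (t-t₀)^{-(q-1)} m^q)` for all `t > t₀`. -/
theorem stmt_17 (q : ℕ) (hq : 2 < q) (C : ℝ) (hC : 0 < C) :
    ∃ C' : ℝ, 0 < C' ∧
      ∀ (m t₀ : ℝ) (y : ℝ → ℝ), 0 < m →
        (∀ t, t₀ ≤ t → 0 < y t) →
        DifferentiableOn ℝ y (Ici t₀) →
        (∀ t, t₀ ≤ t → derivWithin y (Ici t₀) t ≤
          -C * y t ^ ((1 : ℝ) + 1 / ((q : ℝ) - 1)) * m ^ (-(q : ℝ) / ((q : ℝ) - 1))) →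
        ∀ t, t₀ < t →
          y t ≤ min (y t₀) (C' * (t - t₀) ^ (-((q : ℝ) - 1)) * m ^ (q : ℕ)) := by
  have hβ : 0 < (q : ℝ) - 1 := by
    have : (2 : ℝ) < q := by exact_mod_cast hq
    linarith
  refine ⟨(((q : ℝ) - 1)⁻¹ * C) ^ (-((q : ℝ) - 1)), by positivity, ?_⟩
  intro m t₀ y hm hy hdiff hderiv t ht
  have hmK := rpow_pos_of_pos hm (-(q : ℝ) / ((q : ℝ) - 1))
  have hderiv' : ∀ s, t₀ ≤ s → derivWithin y (Ici t₀) s ≤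
      -(C * m ^ (-(q : ℝ) / ((q : ℝ) - 1))) * y s ^ (1 + ((q : ℝ) - 1)⁻¹) := fun s hs =>
    (hderiv s hs).trans_eq (by rw [one_div]; ring)
  refine le_min
    (antitoneOn_of_derivWithin_le_neg_mul_rpow (by positivity) hy hdiff hderiv'
      self_mem_Ici ht.le ht.le) ?_
  refine (le_rpow_of_derivWithin_le_neg_mul_rpow (by positivity) (inv_pos.2 hβ) hy hdiff
    hderiv' t ht).trans_eq ?_
  have hm_pow : (m ^ (-(q : ℝ) / ((q : ℝ) - 1))) ^ (-((q : ℝ) - 1)) = m ^ q := by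
    rw [← rpow_mul hm.le, div_mul_eq_mul_div, neg_mul_neg, mul_div_assoc, div_self hβ.ne',
      mul_one, rpow_natCast]
  rw [inv_inv, show ((q : ℝ) - 1)⁻¹ * (C * m ^ (-(q : ℝ) / ((q : ℝ) - 1))) * (t - t₀) =
      ((q : ℝ) - 1)⁻¹ * C * (t - t₀) * m ^ (-(q : ℝ) / ((q : ℝ) - 1)) by ring,
    mul_rpow (by have := sub_pos.2 ht; positivity) hmK.le,
    mul_rpow (by positivity) (sub_pos.2 ht).le, hm_pow]
end
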